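/- arXiv:1501.06220 — 2 statements merged into one kernel-verified Lean document; each statement's English description precedes it below -/
import Mathlib

section
/- If q(x) = 1/f(x) with f a formal power series f(x) = x + Σ fₖ x^{k+1}/(k+1)! satisfies the two-variable functional equation q(x)q(x+y) + q(−x)q(y) + q(−x−y)q(−y) = C, then q satisfies the one-variable functional-differential equation q(x)² − f₁ q(−x) + q'(−x) = C. -/
noncomputable def sub2 (f : PowerSeries ℚ) (s t : ℚ) : MvPowerSeries (Fin 2) ℚ :=
  fun d => (PowerSeries.coeff (R := ℚ) (d 0 + d 1) f) * ((d 0 + d 1).choose (d 0)) * s ^ (d 0) * t ^ (d 1)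

/-- `1 / f(s·x + t·y)` as an element of the field of fractions of `ℚ⟦x, y⟧`. -/
noncomputable def qv (f : PowerSeries ℚ) (s t : ℚ) : FractionRing (MvPowerSeries (Fin 2) ℚ) :=
  (algebraMap (MvPowerSeries (Fin 2) ℚ) (FractionRing (MvPowerSeries (Fin 2) ℚ)) (sub2 f s t))⁻¹

/-- The two-variable functional equation
`q(x)q(x+y) + q(-x)q(y) + q(-x-y)q(-y) = C` for `q = 1/f`. -/
def TwoVarEq (f : PowerSeries ℚ) (C : ℚ) : Prop :=
  qv f 1 0 * qv f 1 1 + qv f (-1) 0 * qv f 0 1 + qv f (-1) (-1) * qv f 0 (-1)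
    = (C : FractionRing (MvPowerSeries (Fin 2) ℚ))

/-- Substitution `x ↦ -x` in a Laurent series. -/
noncomputable def negSub (q : LaurentSeries ℚ) : LaurentSeries ℚ :=
  { coeff := fun n => (-1 : ℚ) ^ n * q.coeff n,
    isPWO_support' := q.isPWO_support'.mono (by
      intro n hn
      simp only [Function.mem_support] at hn ⊢
      intro h
      exact hn (by rw [h, mul_zero])) }

/-- `q = 1/f` as a Laurent series. -/
noncomputable def lq (f : PowerSeries ℚ) : LaurentSeries ℚ :=
  (HahnSeries.ofPowerSeries ℤ ℚ f)⁻¹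

/-- Derivative of Laurent series. -/
noncomputable def lD : LaurentSeries ℚ → LaurentSeries ℚ := LaurentSeries.derivative ℚ

/-- The one-variable functional-differential equation
`q(x)² − f₁ q(−x) + q'(−x) = C` for `q = 1/f`. -/
def OneVarEq (f : PowerSeries ℚ) (f1 C : ℚ) : Prop :=
  (lq f) ^ 2 - f1 • negSub (lq f) + negSub (lD (lq f)) = C • (1 : LaurentSeries ℚ)

/-!
Clear the six denominators of the two-variable equation in `ℚ⟦x, y⟧` and compare the
coefficients of `y²`. Since `f(y) f(-y) = -y² + O(y³)`, only the terms of the other factors up to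
first order in `y` survive, and one gets
`f(-x)² - f₁ f(x)² f(-x) - f(x)² f'(-x) = C f(x)² f(-x)²`.
Dividing by `f(x)² f(-x)²` in the field of Laurent series gives the one-variable equation, because
`q ↦ q(-x)` is a ring endomorphism and the derivative obeys the Leibniz rule there; both facts
reduce to power series by writing a Laurent series as `X ^ a` times a power series.
-/

/-- Sends `y` (index `1`) to `none`, which `MvPowerSeries.optionEquivLeft` makes the outer
variable. -/
def finTwoEquivOptionUnit : Fin 2 ≃ Option Unit :=
  (finSuccEquiv' (Fin.last 1)).trans (Equiv.optionCongr finOneEquiv)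

namespace MvPowerSeries

variable {R : Type*} [CommSemiring R]

noncomputable def toPowerSeriesInY :
    MvPowerSeries (Fin 2) R →ₐ[R] PowerSeries (PowerSeries R) :=
  (optionEquivLeft Unit R).toAlgHom.comp (rename finTwoEquivOptionUnit)

theorem coeff_coeff_toPowerSeriesInY (g : MvPowerSeries (Fin 2) R) (m n : ℕ) :
    PowerSeries.coeff m (PowerSeries.coeff n (toPowerSeriesInY g)) =
      coeff (Finsupp.single 0 m + Finsupp.single 1 n) g := by
  have : (Finsupp.single () m).optionElim n =
      Finsupp.embDomain finTwoEquivOptionUnit.toEmbedding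
        (Finsupp.single 0 m + Finsupp.single 1 n) := by
    ext a
    rcases a with _ | _ <;>
      simp [finTwoEquivOptionUnit, Finsupp.embDomain_add, Finsupp.single_apply]
  rw [← coeff_embDomain_rename _ g, ← this]
  exact coeff_coeff_optionEquivLeft _ _ _

theorem toPowerSeriesInY_C (r : R) :
    toPowerSeriesInY (C r) = PowerSeries.C (PowerSeries.C r) := by
  have := toPowerSeriesInY.commutes r
  rwa [PowerSeries.algebraMap_apply, PowerSeries.algebraMap_apply, algebraMap_apply,
    Algebra.algebraMap_self, RingHom.id_apply] at this

end MvPowerSeries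

open PowerSeries HahnSeries
open MvPowerSeries (toPowerSeriesInY)

section sub2

variable (f : ℚ⟦X⟧) (s t : ℚ)

theorem coeff_coeff_toPowerSeriesInY_sub2 (m n : ℕ) :
    coeff m (coeff n (toPowerSeriesInY (sub2 f s t))) =
      coeff (m + n) f * (m + n).choose m * s ^ m * t ^ n := by
  rw [MvPowerSeries.coeff_coeff_toPowerSeriesInY, MvPowerSeries.coeff_apply, sub2]
  simp

theorem constantCoeff_toPowerSeriesInY_sub2 :
    constantCoeff (toPowerSeriesInY (sub2 f s t)) = rescale s f := by
  ext m
  rw [← coeff_zero_eq_constantCoeff_apply, coeff_coeff_toPowerSeriesInY_sub2, coeff_rescale]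
  simp [mul_comm]

theorem coeff_one_toPowerSeriesInY_sub2 :
    coeff 1 (toPowerSeriesInY (sub2 f s t)) = C t * rescale s (d⁄dX ℚ f) := by
  ext m
  rw [coeff_coeff_toPowerSeriesInY_sub2, coeff_C_mul, coeff_rescale, coeff_derivative,
    Nat.choose_succ_self_right]
  push_cast
  ring

theorem coeff_toPowerSeriesInY_sub2_zero_left (n : ℕ) :
    coeff n (toPowerSeriesInY (sub2 f 0 t)) = C (t ^ n * coeff n f) := by
  ext m
  rw [coeff_coeff_toPowerSeriesInY_sub2, coeff_C]
  rcases m with _ | m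
  · simp [mul_comm]
  · simp

theorem coeff_succ_toPowerSeriesInY_sub2_zero_right (n : ℕ) :
    coeff (n + 1) (toPowerSeriesInY (sub2 f s 0)) = 0 := by
  ext m
  rw [coeff_coeff_toPowerSeriesInY_sub2]
  simp

theorem sub2_ne_zero (h1 : coeff 1 f ≠ 0) (hst : s ≠ 0 ∨ t ≠ 0) : sub2 f s t ≠ 0 := by
  intro h
  have hx := congrArg (fun g => coeff 1 (coeff 0 (toPowerSeriesInY g))) h
  have hy := congrArg (fun g => coeff 0 (coeff 1 (toPowerSeriesInY g))) h
  simp only [coeff_coeff_toPowerSeriesInY_sub2, map_zero] at hx hy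
  simp_all

end sub2

theorem IsFractionRing.eq_of_sum_inv_mul_inv_eq {A K : Type*} [CommRing A] [Field K]
    [Algebra A K] [IsFractionRing A K] {a b c d e g k : A} (ha : a ≠ 0) (hb : b ≠ 0)
    (hc : c ≠ 0) (hd : d ≠ 0) (he : e ≠ 0) (hg : g ≠ 0)
    (h : (algebraMap A K a)⁻¹ * (algebraMap A K b)⁻¹ +
      (algebraMap A K c)⁻¹ * (algebraMap A K d)⁻¹ +
      (algebraMap A K e)⁻¹ * (algebraMap A K g)⁻¹ = algebraMap A K k) :
    c * d * (e * g) + a * b * (e * g) + a * b * (c * d) = k * (a * b * (c * d * (e * g))) := by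
  have hinj := IsFractionRing.injective A K
  simp only [← map_ne_zero_iff _ hinj] at ha hb hc hd he hg
  apply hinj
  field_simp at h
  simp only [map_add, map_mul]
  linear_combination h

theorem PowerSeries.coeff_two_mul {R : Type*} [CommSemiring R] (φ ψ : R⟦X⟧) :
    coeff 2 (φ * ψ) =
      constantCoeff φ * coeff 2 ψ + coeff 1 φ * coeff 1 ψ + coeff 2 φ * constantCoeff ψ := by
  rw [coeff_mul, Finset.Nat.sum_antidiagonal_eq_sum_range_succ_mk]
  simp [Finset.sum_range_succ, add_assoc]

theorem TwoVarEq.clear_denominators {f : ℚ⟦X⟧} {C : ℚ} (heq : TwoVarEq f C)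
    (h1 : coeff 1 f ≠ 0) :
    sub2 f (-1) 0 * sub2 f 0 1 * (sub2 f (-1) (-1) * sub2 f 0 (-1)) +
      sub2 f 1 0 * sub2 f 1 1 * (sub2 f (-1) (-1) * sub2 f 0 (-1)) +
      sub2 f 1 0 * sub2 f 1 1 * (sub2 f (-1) 0 * sub2 f 0 1) =
    MvPowerSeries.C C * (sub2 f 1 0 * sub2 f 1 1 * (sub2 f (-1) 0 * sub2 f 0 1 *
        (sub2 f (-1) (-1) * sub2 f 0 (-1)))) := by
  have hC : (C : FractionRing (MvPowerSeries (Fin 2) ℚ)) =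
      algebraMap _ _ (MvPowerSeries.C (σ := Fin 2) C) :=
    (eq_ratCast ((algebraMap _ _).comp MvPowerSeries.C) C).symm
  rw [TwoVarEq, hC] at heq
  exact IsFractionRing.eq_of_sum_inv_mul_inv_eq (sub2_ne_zero f _ _ h1 (by norm_num))
    (sub2_ne_zero f _ _ h1 (by norm_num)) (sub2_ne_zero f _ _ h1 (by norm_num))
    (sub2_ne_zero f _ _ h1 (by norm_num)) (sub2_ne_zero f _ _ h1 (by norm_num))
    (sub2_ne_zero f _ _ h1 (by norm_num)) heq

theorem TwoVarEq.oneVarEq_cleared {f : ℚ⟦X⟧} {C : ℚ} (heq : TwoVarEq f C)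
    (h0 : constantCoeff f = 0) (h1 : coeff 1 f = 1) :
    (rescale (-1) f) ^ 2 - PowerSeries.C (2 * coeff 2 f) * (f ^ 2 * rescale (-1) f)
        - f ^ 2 * rescale (-1) (d⁄dX ℚ f)
      = PowerSeries.C C * (f ^ 2 * (rescale (-1) f) ^ 2) := by
  have key := congrArg (fun g => coeff 2 (toPowerSeriesInY g))
    (heq.clear_denominators (by simp [h1]))
  simp only [map_add, map_mul, coeff_two_mul, coeff_one_mul, constantCoeff_toPowerSeriesInY_sub2,
    coeff_one_toPowerSeriesInY_sub2, coeff_toPowerSeriesInY_sub2_zero_left,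
    coeff_succ_toPowerSeriesInY_sub2_zero_right, MvPowerSeries.toPowerSeriesInY_C, coeff_C_mul,
    rescale_zero, rescale_one, RingHom.coe_comp, Function.comp_apply, RingHom.id_apply, h0, h1,
    map_zero, map_one, map_neg, even_two, Even.neg_pow, one_pow, pow_one, one_mul, mul_one,
    mul_zero, zero_mul, add_zero, zero_add, neg_mul, mul_neg, neg_neg] at key
  rw [map_mul, map_ofNat]
  linear_combination -key

theorem HahnSeries.coeff_single_mul_ofPowerSeries {R : Type*} [Semiring R] (a : ℤ) (r : R)
    (p : R⟦X⟧) (n : ℤ) :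
    (single a r * ofPowerSeries ℤ R p).coeff n =
      if a ≤ n then r * PowerSeries.coeff (n - a).toNat p else 0 := by
  have h := coeff_single_mul_add (r := r) (x := ofPowerSeries ℤ R p) (a := n - a) (b := a)
  rw [sub_add_cancel] at h
  rw [h]
  split_ifs with hn
  · rw [← Int.toNat_of_nonneg (sub_nonneg.mpr hn), ofPowerSeries_apply_coeff, Int.toNat_natCast]
  · rw [ofPowerSeries_apply, embDomain_of_notMem_range, mul_zero]
    rintro ⟨k, hk⟩
    have : (k : ℤ) = n - a := hk
    omega

theorem negSub_single_mul_ofPowerSeries (a : ℤ) (r : ℚ) (p : ℚ⟦X⟧) :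
    negSub (single a r * ofPowerSeries ℤ ℚ p) =
      single a ((-1 : ℚ) ^ a * r) * ofPowerSeries ℤ ℚ (rescale (-1) p) := by
  ext n
  change (-1) ^ n * _ = _
  rw [coeff_single_mul_ofPowerSeries, coeff_single_mul_ofPowerSeries]
  split_ifs with hn
  · rw [coeff_rescale, ← zpow_natCast, Int.toNat_of_nonneg (sub_nonneg.mpr hn),
      zpow_sub₀ (by norm_num)]
    field_simp
  · rw [mul_zero]

theorem negSub_ofPowerSeries (p : ℚ⟦X⟧) :
    negSub (ofPowerSeries ℤ ℚ p) = ofPowerSeries ℤ ℚ (rescale (-1) p) := by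
  simpa using negSub_single_mul_ofPowerSeries 0 1 p

theorem HahnSeries.single_mul_ofPowerSeries_mul {R : Type*} [CommSemiring R] (a b : ℤ) (r s : R)
    (p q : R⟦X⟧) :
    single a r * ofPowerSeries ℤ R p * (single b s * ofPowerSeries ℤ R q) =
      single (a + b) (r * s) * ofPowerSeries ℤ R (p * q) := by
  rw [map_mul (ofPowerSeries ℤ R), ← single_mul_single]
  ring

theorem negSub_mul (x y : LaurentSeries ℚ) : negSub (x * y) = negSub x * negSub y := by
  rw [← LaurentSeries.single_order_mul_powerSeriesPart x,
    ← LaurentSeries.single_order_mul_powerSeriesPart y, single_mul_ofPowerSeries_mul,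
    negSub_single_mul_ofPowerSeries, negSub_single_mul_ofPowerSeries,
    negSub_single_mul_ofPowerSeries, single_mul_ofPowerSeries_mul, map_mul (rescale _),
    zpow_add₀ (by norm_num), mul_one, mul_one, mul_one, mul_one]

noncomputable def negSubRingHom : LaurentSeries ℚ →+* LaurentSeries ℚ where
  toFun := negSub
  map_one' := by simpa using negSub_ofPowerSeries 1
  map_mul' := negSub_mul
  map_zero' := by ext n; exact mul_zero _
  map_add' x y := by ext n; exact mul_add _ _ _

theorem negSubRingHom_apply (x : LaurentSeries ℚ) : negSubRingHom x = negSub x := rfl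

theorem lD_single_mul_ofPowerSeries (a : ℤ) (p : ℚ⟦X⟧) :
    lD (single a 1 * ofPowerSeries ℤ ℚ p) =
      single (a - 1) 1 *
        ofPowerSeries ℤ ℚ (X * d⁄dX ℚ p + PowerSeries.C (a : ℚ) * p) := by
  ext n
  rw [lD, LaurentSeries.derivative_apply, LaurentSeries.hasseDeriv_coeff,
    coeff_single_mul_ofPowerSeries, coeff_single_mul_ofPowerSeries, Ring.choose_one_right]
  simp only [one_mul, Nat.cast_one, sub_le_iff_le_add, zsmul_eq_mul]
  split_ifs with hn
  · obtain ⟨k, rfl⟩ : ∃ k : ℕ, a = n + 1 - k := ⟨(n + 1 - a).toNat, by omega⟩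
    rw [show n - (n + 1 - k - 1) = k by ring, show n + 1 - (n + 1 - k) = k by ring,
      Int.toNat_natCast, map_add, coeff_C_mul]
    rcases k with _ | k
    · rw [coeff_zero_X_mul]
      push_cast
      ring
    · rw [coeff_succ_X_mul, coeff_derivative]
      push_cast
      ring
  · rw [mul_zero]

theorem lD_mul (x y : LaurentSeries ℚ) : lD (x * y) = x * lD y + lD x * y := by
  rw [← LaurentSeries.single_order_mul_powerSeriesPart x,
    ← LaurentSeries.single_order_mul_powerSeriesPart y]
  set a := x.order
  set b := y.order
  set p := x.powerSeriesPart
  set q := y.powerSeriesPart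
  have hpq : X * d⁄dX ℚ (p * q) + PowerSeries.C ((a + b : ℤ) : ℚ) * (p * q) =
      p * (X * d⁄dX ℚ q + PowerSeries.C (b : ℚ) * q) +
        (X * d⁄dX ℚ p + PowerSeries.C (a : ℚ) * p) * q := by
    rw [Derivation.leibniz, smul_eq_mul, smul_eq_mul, Int.cast_add, map_add]
    ring
  simp only [single_mul_ofPowerSeries_mul, lD_single_mul_ofPowerSeries, mul_one, hpq]
  rw [show a + (b - 1) = a + b - 1 by ring, show a - 1 + b = a + b - 1 by ring, ← mul_add,
    ← map_add]

theorem lD_ofPowerSeries (p : ℚ⟦X⟧) :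
    lD (ofPowerSeries ℤ ℚ p) = ofPowerSeries ℤ ℚ (d⁄dX ℚ p) := by
  have h := lD_single_mul_ofPowerSeries 0 p
  rw [single_zero_one, one_mul, Int.cast_zero, map_zero, zero_mul, add_zero, map_mul,
    ofPowerSeries_X, ← mul_assoc, single_mul_single] at h
  simpa using h

theorem lD_inv (x : LaurentSeries ℚ) : lD x⁻¹ = -lD x * x⁻¹ ^ 2 := by
  rcases eq_or_ne x 0 with rfl | hx
  · simp [lD]
  have h := lD_mul x x⁻¹
  rw [mul_inv_cancel₀ hx, ← map_one (ofPowerSeries ℤ ℚ), lD_ofPowerSeries,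
    Derivation.map_one_eq_zero, map_zero] at h
  linear_combination (-x⁻¹) * h - lD x⁻¹ * mul_inv_cancel₀ hx

/-- The two-variable functional equation implies the one-variable
functional-differential equation `q(x)² − f₁ q(−x) + q'(−x) = C`. -/
theorem stmt_3 (f : PowerSeries ℚ) (C : ℚ) (fc : ℕ → ℚ)
    (h0 : PowerSeries.constantCoeff (R := ℚ) f = 0) (h1 : PowerSeries.coeff (R := ℚ) 1 f = 1)
    (hfc : ∀ k, 1 ≤ k → PowerSeries.coeff (R := ℚ) (k + 1) f = fc k / ((k + 1).factorial : ℚ))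
    (heq : TwoVarEq f C) :
    OneVarEq f (fc 1) C := by
  have hfc1 : fc 1 = 2 * coeff 2 f := by
    rw [hfc 1 le_rfl]
    ring
  have hf : ofPowerSeries ℤ ℚ f ≠ 0 := by
    rw [map_ne_zero_iff _ ofPowerSeries_injective]
    rintro rfl
    simp at h1
  have hfm : ofPowerSeries ℤ ℚ (rescale (-1) f) ≠ 0 := by
    rw [map_ne_zero_iff _ ofPowerSeries_injective]
    intro h
    simpa [coeff_rescale, h1] using congrArg (PowerSeries.coeff 1) h
  have key := congrArg (ofPowerSeries ℤ ℚ) (heq.oneVarEq_cleared h0 h1)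
  simp only [map_sub, map_mul, map_pow, ofPowerSeries_C,
    eq_ratCast (HahnSeries.C (Γ := ℤ) (R := ℚ)), ← hfc1] at key
  simp only [OneVarEq, lq, lD_inv, ← negSubRingHom_apply, map_mul, map_neg, map_pow, map_inv₀]
  simp only [negSubRingHom_apply, negSub_ofPowerSeries, lD_ofPowerSeries]
  rw [Rat.smul_def, Rat.smul_def, mul_one]
  field_simp
  linear_combination key
end

section
/- If a formal power series f(x) = x + Σ fₖ x^{k+1}/(k+1)! over ℚ satisfies the one-variable equation q(x)² − f₁q(−x) + q'(−x) = C with q = 1/f, then 2f₆ = 315f₁⁶ − 945f₁⁴f₂ + 345f₁³f₃ + 660f₁²f₂² − 93f₁²f₄ − 290f₁f₂f₃ − 60f₂³ + 18f₁f₅ + 32f₂f₄ + 20f₃². -/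
/-! Write `f = x·u` with `u(0) = 1`. Then `q = x⁻¹·v` with `v = u⁻¹`, and for `n ≥ 1` the
coefficient of `xⁿ` in the equation involves only the coefficients of `v` (the constant `C` only
enters at `n = 0`). At `n = 4` it reads `[v²]₆ − f₁ v₅ + 5 v₆ = 0`; expressing `v₁, …, v₆`
through the coefficients `fₖ/(k+1)!` of `u` turns this into the stated relation. -/

open PowerSeries

section Inverse

variable {K : Type*} [Field K]

theorem inv_ofPowerSeries_X_mul {u : K⟦X⟧} (hu : constantCoeff u ≠ 0) :
    (HahnSeries.ofPowerSeries ℤ K (X * u))⁻¹ =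
      HahnSeries.single (-1 : ℤ) (1 : K) * HahnSeries.ofPowerSeries ℤ K u⁻¹ := by
  apply inv_eq_of_mul_eq_one_right
  rw [map_mul, HahnSeries.ofPowerSeries_X, mul_mul_mul_comm, HahnSeries.single_mul_single,
    ← map_mul, PowerSeries.mul_inv_cancel u hu]
  simp

theorem coeff_inv_mk_of_zero_eq_one (a : ℕ → K) (ha : a 0 = 1) :
    coeff 1 (mk a)⁻¹ = -a 1 ∧
    coeff 2 (mk a)⁻¹ = a 1 ^ 2 - a 2 ∧
    coeff 3 (mk a)⁻¹ = -a 1 ^ 3 + 2 * a 1 * a 2 - a 3 ∧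
    coeff 4 (mk a)⁻¹ = a 1 ^ 4 - 3 * a 1 ^ 2 * a 2 + a 2 ^ 2 + 2 * a 1 * a 3 - a 4 ∧
    coeff 5 (mk a)⁻¹ = -a 1 ^ 5 + 4 * a 1 ^ 3 * a 2 - 3 * a 1 * a 2 ^ 2 - 3 * a 1 ^ 2 * a 3
      + 2 * a 2 * a 3 + 2 * a 1 * a 4 - a 5 ∧
    coeff 6 (mk a)⁻¹ = a 1 ^ 6 - 5 * a 1 ^ 4 * a 2 + 6 * a 1 ^ 2 * a 2 ^ 2 - a 2 ^ 3
      + 4 * a 1 ^ 3 * a 3 - 6 * a 1 * a 2 * a 3 + a 3 ^ 2 - 3 * a 1 ^ 2 * a 4 + 2 * a 2 * a 4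
      + 2 * a 1 * a 5 - a 6 := by
  have hu : constantCoeff (mk a) ≠ 0 := by simp [ha]
  have hv0 : coeff 0 (mk a)⁻¹ = 1 := by simp [ha]
  have e : ∀ n ≠ 0, ∑ i ∈ Finset.range (n + 1), a i * coeff (n - i) (mk a)⁻¹ = 0 := by
    intro n hn
    have := congrArg (coeff n) (PowerSeries.mul_inv_cancel _ hu)
    simpa [coeff_mul, Finset.Nat.sum_antidiagonal_eq_sum_range_succ_mk, coeff_one, hn] using this
  have e1 := e 1 one_ne_zero
  have e2 := e 2 two_ne_zero
  have e3 := e 3 three_ne_zero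
  have e4 := e 4 four_ne_zero
  have e5 := e 5 (by norm_num)
  have e6 := e 6 (by norm_num)
  simp only [Finset.sum_range_succ, Finset.sum_range_zero, zero_add, ha, one_mul,
    Nat.sub_self, Nat.sub_zero, hv0] at e1 e2 e3 e4 e5 e6
  have v1 : coeff 1 (mk a)⁻¹ = -a 1 := by linear_combination e1
  have v2 : coeff 2 (mk a)⁻¹ = a 1 ^ 2 - a 2 := by linear_combination e2 - a 1 * v1
  have v3 : coeff 3 (mk a)⁻¹ = -a 1 ^ 3 + 2 * a 1 * a 2 - a 3 := by
    linear_combination e3 - a 1 * v2 - a 2 * v1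
  have v4 : coeff 4 (mk a)⁻¹ = a 1 ^ 4 - 3 * a 1 ^ 2 * a 2 + a 2 ^ 2 + 2 * a 1 * a 3 - a 4 := by
    linear_combination e4 - a 1 * v3 - a 2 * v2 - a 3 * v1
  have v5 : coeff 5 (mk a)⁻¹ = -a 1 ^ 5 + 4 * a 1 ^ 3 * a 2 - 3 * a 1 * a 2 ^ 2
      - 3 * a 1 ^ 2 * a 3 + 2 * a 2 * a 3 + 2 * a 1 * a 4 - a 5 := by
    linear_combination e5 - a 1 * v4 - a 2 * v3 - a 3 * v2 - a 4 * v1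
  refine ⟨v1, v2, v3, v4, v5, ?_⟩
  linear_combination e6 - a 1 * v5 - a 2 * v4 - a 3 * v3 - a 4 * v2 - a 5 * v1

end Inverse

theorem coeff_negSub (q : LaurentSeries ℚ) (n : ℤ) :
    (negSub q).coeff n = (-1 : ℚ) ^ n * q.coeff n := rfl

theorem coeff_lD (q : LaurentSeries ℚ) (n : ℤ) :
    (lD q).coeff n = (n + 1) * q.coeff (n + 1) := by
  rw [lD, LaurentSeries.derivative_apply, LaurentSeries.hasseDeriv_coeff, Ring.choose_one_right,
    zsmul_eq_mul, Nat.cast_one]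
  push_cast
  ring

section XMul

variable {u : ℚ⟦X⟧}

theorem lq_X_mul (hu : constantCoeff u ≠ 0) :
    lq (X * u) = HahnSeries.single (-1 : ℤ) (1 : ℚ) * HahnSeries.ofPowerSeries ℤ ℚ u⁻¹ :=
  inv_ofPowerSeries_X_mul hu

theorem coeff_lq_X_mul (hu : constantCoeff u ≠ 0) (n : ℕ) :
    (lq (X * u)).coeff (n - 1) = coeff n u⁻¹ := by
  rw [lq_X_mul hu, sub_eq_add_neg, HahnSeries.coeff_single_mul_add, one_mul,
    HahnSeries.ofPowerSeries_apply_coeff]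

theorem coeff_lq_X_mul_sq (hu : constantCoeff u ≠ 0) (n : ℕ) :
    (lq (X * u) ^ 2).coeff (n - 2) = coeff n (u⁻¹ ^ 2) := by
  rw [lq_X_mul hu, mul_pow, HahnSeries.single_pow, ← map_pow, one_pow, sub_eq_add_neg]
  rw [show (2 : ℕ) • (-1 : ℤ) = -2 by norm_num, HahnSeries.coeff_single_mul_add, one_mul,
    HahnSeries.ofPowerSeries_apply_coeff]

theorem OneVarEq.coeff_X_mul (hu : constantCoeff u ≠ 0) {f1 C : ℚ} (h : OneVarEq (X * u) f1 C)
    {n : ℕ} (hn : n ≠ 0) :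
    coeff (n + 2) (u⁻¹ ^ 2)
      + (-1) ^ n * ((n + 1) * coeff (n + 2) u⁻¹ - f1 * coeff (n + 1) u⁻¹) = 0 := by
  have hc := congrArg (HahnSeries.coeff · (n : ℤ)) h
  have hsq := coeff_lq_X_mul_sq hu (n + 2)
  have hq := coeff_lq_X_mul hu (n + 1)
  have hq' := coeff_lq_X_mul hu (n + 2)
  push_cast at hsq hq hq'
  rw [add_sub_cancel_right] at hsq hq
  rw [add_sub_assoc, show (2 : ℤ) - 1 = 1 by norm_num] at hq'
  simp only [HahnSeries.coeff_add, HahnSeries.coeff_sub, HahnSeries.coeff_smul,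
    coeff_negSub, coeff_lD, HahnSeries.coeff_one, hsq, hq, hq', zpow_natCast, smul_eq_mul,
    Nat.cast_eq_zero, hn, if_false, mul_zero] at hc
  linear_combination hc

end XMul

/-- The relation on `f₆` obtained from the coefficient of `x⁴` in the one-variable
equation `q(x)² − f₁ q(−x) + q'(−x) = C`. -/
theorem stmt_18 (f : PowerSeries ℚ) (C : ℚ) (fc : ℕ → ℚ)
    (h0 : PowerSeries.constantCoeff f = 0) (h1 : PowerSeries.coeff 1 f = 1)
    (hfc : ∀ k, 1 ≤ k → PowerSeries.coeff (k + 1) f = fc k / ((k + 1).factorial : ℚ))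
    (heq : OneVarEq f (fc 1) C) :
    2 * fc 6 = 315 * (fc 1) ^ 6 - 945 * (fc 1) ^ 4 * fc 2 + 345 * (fc 1) ^ 3 * fc 3
      + 660 * (fc 1) ^ 2 * (fc 2) ^ 2 - 93 * (fc 1) ^ 2 * fc 4 - 290 * fc 1 * fc 2 * fc 3
      - 60 * (fc 2) ^ 3 + 18 * fc 1 * fc 5 + 32 * fc 2 * fc 4 + 20 * (fc 3) ^ 2 := by
  have hf : f = X * mk fun p => coeff (p + 1) f := by
    simpa [h0] using eq_X_mul_shift_add_const f
  rw [hf] at heq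
  have h4 := heq.coeff_X_mul (by simp [h1]) (n := 4) (by norm_num)
  obtain ⟨v1, v2, v3, v4, v5, v6⟩ := coeff_inv_mk_of_zero_eq_one (fun p => coeff (p + 1) f) h1
  rw [sq, coeff_mul, Finset.Nat.sum_antidiagonal_eq_sum_range_succ_mk] at h4
  simp only [Finset.sum_range_succ, Finset.sum_range_zero, zero_add] at h4
  norm_num [h1, v1, v2, v3, v4, v5, v6, hfc, Nat.factorial] at h4
  linear_combination -1440 * h4
end
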